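/- If a chain of domino tiles is blocked with both ends equal to k, then every value j in {0,…,6} with j ≠ k occurs a positive even number of times among the 2n entries a₁,b₁,…,aₙ,bₙ of the chain, and all seven domino tiles containing k belong to the chain. -/

import Mathlib

/-- A domino tile is an unordered pair of values in `{0,…,6}`. -/
abbrev Tile := Sym2 (Fin 7)

/-- The pip sum of the tile `[a,b]` is `a + b`. -/
def pips (t : Tile) : ℕ :=
  Sym2.lift ⟨fun (a b : Fin 7) => (a : ℕ) + (b : ℕ), fun a b => Nat.add_comm a b⟩ t

/-- A chain of domino tiles: a nonempty finite sequence of oriented tiles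
`(a₁,b₁),…,(aₙ,bₙ)` whose underlying unordered tiles are pairwise distinct and
which satisfies `bᵢ = aᵢ₊₁` for all `1 ≤ i < n`. -/
structure DChain where
  tiles : List (Fin 7 × Fin 7)
  ne : tiles ≠ []
  nodup : (tiles.map fun p => Sym2.mk p.1 p.2).Nodup
  linked : tiles.Chain' fun p q => p.2 = q.1

/-- The left end `a₁` of a chain. -/
def DChain.left (C : DChain) : Fin 7 := (C.tiles.head C.ne).1

/-- The right end `bₙ` of a chain. -/
def DChain.right (C : DChain) : Fin 7 := (C.tiles.getLast C.ne).2

/-- The `2n` entries `a₁,b₁,a₂,b₂,…,aₙ,bₙ` of a chain. -/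
def DChain.entries (C : DChain) : List (Fin 7) := C.tiles.flatMap fun p => [p.1, p.2]

/-- The underlying (unordered) tiles of a chain. -/
def DChain.tileList (C : DChain) : List Tile := C.tiles.map fun p => Sym2.mk p.1 p.2

/-- The total pip sum of a chain. -/
def DChain.pipsSum (C : DChain) : ℕ := (C.tiles.map fun p => (p.1 : ℕ) + (p.2 : ℕ)).sum

/-- A chain is blocked if no domino tile outside the chain contains its left end,
and no domino tile outside the chain contains its right end. -/
def DChain.Blocked (C : DChain) : Prop :=
  ∀ t : Tile, t ∉ C.tileList → C.left ∉ t ∧ C.right ∉ t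

/-!
A blocked chain with both ends `k` must contain every tile containing `k`: otherwise that tile
could be attached at the left end. In particular it contains `[j,k]` for each `j ≠ k`, so `j`
is an entry. Evenness is a parity count: in `a₁ b₁ a₂ b₂ … aₙ bₙ` every value `bᵢ = aᵢ₊₁` at an
internal join is counted twice, so every value occurs an even number of times once the two ends
`a₁, bₙ` are counted once more; here the ends are `k ≠ j`.
-/

theorem List.even_count_flatMap_pair_add_count_ends {α : Type*} [DecidableEq α] (x : α) :
    ∀ (L : List (α × α)) (hL : L ≠ []), L.IsChain (fun p q => p.2 = q.1) →
      Even ((L.flatMap fun p => [p.1, p.2]).count x + [(L.head hL).1, (L.getLast hL).2].count x)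
  | [p], _, _ => by
    simp only [flatMap_cons, flatMap_nil, append_nil, head_cons, getLast_singleton, count_cons,
      count_nil, beq_iff_eq]
    split <;> split <;> decide
  | p :: q :: rest, _, hchain => by
    obtain ⟨hjoin, hrest⟩ := List.isChain_cons_cons.mp hchain
    have ih := even_count_flatMap_pair_add_count_ends x (q :: rest) (cons_ne_nil _ _) hrest
    rw [getLast_cons (cons_ne_nil _ _)]
    simp only [flatMap_cons, count_append, count_cons, count_nil, head_cons, Nat.even_iff,
      hjoin] at ih ⊢
    omega

namespace DChain

theorem even_count_entries_add_count_ends (C : DChain) (x : Fin 7) :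
    Even (C.entries.count x + [C.left, C.right].count x) :=
  List.even_count_flatMap_pair_add_count_ends x C.tiles C.ne C.linked

theorem Blocked.mem_tileList_of_left_mem {C : DChain} (h : C.Blocked) {t : Tile}
    (ht : C.left ∈ t) : t ∈ C.tileList := by
  by_contra hnot
  exact (h t hnot).1 ht

theorem mem_entries_of_mk_mem_tileList {C : DChain} {a b : Fin 7}
    (h : s(a, b) ∈ C.tileList) : a ∈ C.entries := by
  obtain ⟨p, hp, hpab⟩ := List.mem_map.mp h
  refine List.mem_flatMap.mpr ⟨p, hp, ?_⟩
  rcases (Sym2.mk_eq_mk_iff (p := p) (q := (a, b))).mp hpab with rfl | rfl <;> simp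

end DChain

theorem blocked_entries_and_tiles (C : DChain) (k : Fin 7) (h : C.Blocked)
    (hl : C.left = k) (hr : C.right = k) :
    (∀ j : Fin 7, j ≠ k → 0 < C.entries.count j ∧ Even (C.entries.count j)) ∧
    (∀ t : Tile, k ∈ t → t ∈ C.tileList) := by
  have htiles : ∀ t : Tile, k ∈ t → t ∈ C.tileList := fun t hk =>
    h.mem_tileList_of_left_mem (hl ▸ hk)
  refine ⟨fun j hj => ⟨?_, ?_⟩, htiles⟩
  · exact List.count_pos_iff.mpr
      (DChain.mem_entries_of_mk_mem_tileList (htiles s(j, k) (Sym2.mem_mk_right j k)))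
  · have hends : [C.left, C.right].count j = 0 := by
      simp [hl, hr, Ne.symm hj]
    simpa [hends] using C.even_count_entries_add_count_ends j
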